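/- Define W(x) := ((n−2)·A x·B x + 2·A' x·(C₂ x − n·C₁ x))/((n−2)·(A x)²) + ((n²−5)·(C₂ x)² − 4·(C₁ x)² + 2·(4 + n − n²)·C₁ x·C₂ x)/((n−2)·(n−1)·(A x)²) and W_J(x) := exp(−(n−2)·α x)·A x·W(x), the square of the integrand of the invariant I_J^n of eq. (i4). Let W̄_J be given by the same formula with (A, B, C₁, C₂, α) replaced by the transformed coefficients (Ā, B̄, C̄₁, C̄₂, ᾱ) and A' replaced by the derivative of Ā. If A(x) ≠ 0 for all x, then for every transformation datum one has W̄_J(f x)·(f' x)² = W_J(x) for all x ∈ ℝ, so the integral invariant I_J^n = ∫√(±W_J) dΦ is (up to an additive constant) invariant under the conformal–almost-geodesic frame transformations. -/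

import Mathlib

/-- Transformation rule (t1) for the non-minimal coupling coefficient `A`:
`Ā(f x) = exp(−(n−2)·γ₁ x)·A x`. -/
noncomputable def transA (n : ℕ) (f : ℝ ≃ ℝ) (γ₁ A : ℝ → ℝ) : ℝ → ℝ :=
  fun y => Real.exp (-((n : ℝ) - 2) * γ₁ (f.symm y)) * A (f.symm y)

/-- Transformation rule (t3) for the coefficient `C₁`:
`C̄₁(f x)·f' x = exp(−(n−2)·γ₁ x)·(C₁ x + A x·((n−1)/2·γ₂' x + (n−3)/2·γ₃' x))`. -/
noncomputable def transC1 (n : ℕ) (f : ℝ ≃ ℝ) (γ₁ γ₂ γ₃ A C₁ : ℝ → ℝ) : ℝ → ℝ :=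
  fun y => Real.exp (-((n : ℝ) - 2) * γ₁ (f.symm y)) *
    (C₁ (f.symm y) + A (f.symm y) *
      (((n : ℝ) - 1) / 2 * deriv γ₂ (f.symm y) + ((n : ℝ) - 3) / 2 * deriv γ₃ (f.symm y)))
    / deriv (⇑f) (f.symm y)

/-- Transformation rule (t4) for the coefficient `C₂`:
`C̄₂(f x)·f' x = exp(−(n−2)·γ₁ x)·(C₂ x + A x·((n−1)·γ₂' x − γ₃' x))`. -/
noncomputable def transC2 (n : ℕ) (f : ℝ ≃ ℝ) (γ₁ γ₂ γ₃ A C₂ : ℝ → ℝ) : ℝ → ℝ :=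
  fun y => Real.exp (-((n : ℝ) - 2) * γ₁ (f.symm y)) *
    (C₂ (f.symm y) + A (f.symm y) *
      (((n : ℝ) - 1) * deriv γ₂ (f.symm y) - deriv γ₃ (f.symm y)))
    / deriv (⇑f) (f.symm y)

/-- Transformation rule (t2) for the kinetic coupling `B`:
`B̄(f x)·(f' x)² = exp(−(n−2)·γ₁ x)·( B x
  + (n−1)·( n·A·γ₂'·γ₃' − A·(γ₂')² − A·(γ₃')² + A'·(γ₂' + γ₃') − (n−2)·A·γ₁'·(γ₂' + γ₃') )
  + C₁·( −2n·γ₁' + 2(n+1)·γ₂' − 2·γ₃' ) + C₂·( 2·γ₁' − (n+3)·γ₂' + (n+1)·γ₃' ) )`. -/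
noncomputable def transB (n : ℕ) (f : ℝ ≃ ℝ) (γ₁ γ₂ γ₃ A B C₁ C₂ : ℝ → ℝ) : ℝ → ℝ :=
  fun y =>
    Real.exp (-((n : ℝ) - 2) * γ₁ (f.symm y)) *
      (B (f.symm y)
        + ((n : ℝ) - 1) *
          ((n : ℝ) * A (f.symm y) * deriv γ₂ (f.symm y) * deriv γ₃ (f.symm y)
            - A (f.symm y) * (deriv γ₂ (f.symm y)) ^ 2
            - A (f.symm y) * (deriv γ₃ (f.symm y)) ^ 2
            + deriv A (f.symm y) * (deriv γ₂ (f.symm y) + deriv γ₃ (f.symm y))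
            - ((n : ℝ) - 2) * A (f.symm y) * deriv γ₁ (f.symm y)
              * (deriv γ₂ (f.symm y) + deriv γ₃ (f.symm y)))
        + C₁ (f.symm y) * (-(2 * (n : ℝ)) * deriv γ₁ (f.symm y)
            + 2 * ((n : ℝ) + 1) * deriv γ₂ (f.symm y) - 2 * deriv γ₃ (f.symm y))
        + C₂ (f.symm y) * (2 * deriv γ₁ (f.symm y)
            - ((n : ℝ) + 3) * deriv γ₂ (f.symm y) + ((n : ℝ) + 1) * deriv γ₃ (f.symm y)))
      / (deriv (⇑f) (f.symm y)) ^ 2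

/-- Transformation rule (t6) for the anomalous matter-coupling coefficient `α`:
`ᾱ(f x) = α x − γ₁ x`. -/
def transAlpha (f : ℝ ≃ ℝ) (γ₁ α : ℝ → ℝ) : ℝ → ℝ :=
  fun y => α (f.symm y) - γ₁ (f.symm y)

/-- The quantity `W`, the square of the integrand of the invariant `I_E^n`:
`W = ((n−2)·A·B + 2·A'·(C₂ − n·C₁))/((n−2)·A²)
   + ((n²−5)·C₂² − 4·C₁² + 2·(4 + n − n²)·C₁·C₂)/((n−2)·(n−1)·A²)`. -/
noncomputable def Wsq (n : ℕ) (A B C₁ C₂ : ℝ → ℝ) (x : ℝ) : ℝ :=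
  (((n : ℝ) - 2) * A x * B x + 2 * deriv A x * (C₂ x - (n : ℝ) * C₁ x))
      / (((n : ℝ) - 2) * (A x) ^ 2)
    + (((n : ℝ) ^ 2 - 5) * (C₂ x) ^ 2 - 4 * (C₁ x) ^ 2
        + 2 * (4 + (n : ℝ) - (n : ℝ) ^ 2) * C₁ x * C₂ x)
      / (((n : ℝ) - 2) * ((n : ℝ) - 1) * (A x) ^ 2)

/-- The square `W_J := exp(−(n−2)·α)·A·W` of the integrand of the integral
invariant `I_J^n` of eq. (i4). -/
noncomputable def WsqJ (n : ℕ) (A B C₁ C₂ α : ℝ → ℝ) (x : ℝ) : ℝ :=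
  Real.exp (-((n : ℝ) - 2) * α x) * A x * Wsq n A B C₁ C₂ x

/-! All coefficients are rescaled by the common conformal factor `exp(−(n−2)·γ₁)`, and `W` is
homogeneous of degree zero in it. The powers of `f'` match the weights of `B, C₁, C₂` and of
`Ā'(f x) = (Ā ∘ f)'(x) / f'(x)`, and the `γ₁'`, `γ₂'`, `γ₃'` terms produced by (t2)–(t4) and by
differentiating `Ā` cancel identically, so `W̄(f x)·(f' x)² = W(x)`. The remaining prefactor
`exp(−(n−2)·ᾱ)·Ā` of `W̄_J` equals `exp(−(n−2)·α)·A`, since the shift `ᾱ = α − γ₁` absorbs the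
conformal factor of `Ā`. -/

open Real

lemma Equiv.deriv_symm_apply_apply {𝕜 : Type*} [NontriviallyNormedField 𝕜] (f : 𝕜 ≃ 𝕜) {x : 𝕜}
    (hf : DifferentiableAt 𝕜 f x) (hfsymm : DifferentiableAt 𝕜 f.symm (f x)) :
    deriv f.symm (f x) = (deriv f x)⁻¹ := by
  have hcomp : HasDerivAt (f.symm ∘ f) (deriv f.symm (f x) * deriv f x) x :=
    hfsymm.hasDerivAt.comp x hf.hasDerivAt
  rw [f.symm_comp_self] at hcomp
  exact eq_inv_of_mul_eq_one_left (hcomp.unique (hasDerivAt_id x))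

lemma hasDerivAt_transA (n : ℕ) (f : ℝ ≃ ℝ) {γ₁ A : ℝ → ℝ} {x : ℝ}
    (hf : DifferentiableAt ℝ f x) (hfsymm : DifferentiableAt ℝ f.symm (f x))
    (hγ₁ : DifferentiableAt ℝ γ₁ x) (hA : DifferentiableAt ℝ A x) :
    HasDerivAt (transA n f γ₁ A)
      (exp (-((n : ℝ) - 2) * γ₁ x) * (-((n : ℝ) - 2) * deriv γ₁ x * A x + deriv A x)
        / deriv f x) (f x) := by
  have hfactor : HasDerivAt (fun t => exp (-((n : ℝ) - 2) * γ₁ t) * A t)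
      (exp (-((n : ℝ) - 2) * γ₁ x) * (-((n : ℝ) - 2) * deriv γ₁ x * A x + deriv A x)) x :=
    (((hγ₁.hasDerivAt.const_mul _).exp).mul hA.hasDerivAt).congr_deriv (by ring)
  rw [← f.symm_apply_apply x] at hfactor
  refine (hfactor.comp (f x) hfsymm.hasDerivAt).congr_deriv ?_
  rw [f.symm_apply_apply, f.deriv_symm_apply_apply hf hfsymm, div_eq_mul_inv]

lemma Wsq_trans_mul_deriv_sq (n : ℕ) (hn₁ : (n : ℝ) ≠ 1) (hn₂ : (n : ℝ) ≠ 2)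
    (f : ℝ ≃ ℝ) (γ₁ γ₂ γ₃ A B C₁ C₂ : ℝ → ℝ) {x : ℝ}
    (hf : DifferentiableAt ℝ f x) (hf' : deriv f x ≠ 0)
    (hfsymm : DifferentiableAt ℝ f.symm (f x))
    (hγ₁ : DifferentiableAt ℝ γ₁ x) (hA : DifferentiableAt ℝ A x) (hA0 : A x ≠ 0) :
    Wsq n (transA n f γ₁ A) (transB n f γ₁ γ₂ γ₃ A B C₁ C₂)
        (transC1 n f γ₁ γ₂ γ₃ A C₁) (transC2 n f γ₁ γ₂ γ₃ A C₂) (f x) * (deriv f x) ^ 2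
      = Wsq n A B C₁ C₂ x := by
  have hn₁' : (n : ℝ) - 1 ≠ 0 := sub_ne_zero.mpr hn₁
  have hn₂' : (n : ℝ) - 2 ≠ 0 := sub_ne_zero.mpr hn₂
  simp only [Wsq, (hasDerivAt_transA n f hf hfsymm hγ₁ hA).deriv]
  simp only [transA, transB, transC1, transC2, Equiv.symm_apply_apply]
  field_simp
  ring

lemma exp_transAlpha_mul_transA (n : ℕ) (f : ℝ ≃ ℝ) (γ₁ A α : ℝ → ℝ) (x : ℝ) :
    exp (-((n : ℝ) - 2) * transAlpha f γ₁ α (f x)) * transA n f γ₁ A (f x)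
      = exp (-((n : ℝ) - 2) * α x) * A x := by
  simp only [transAlpha, transA, Equiv.symm_apply_apply]
  rw [← mul_assoc, ← exp_add]
  ring_nf

theorem WsqJ_weight_two_general (n : ℕ) (hn : 3 ≤ n)
    (f : ℝ ≃ ℝ) (γ₁ γ₂ γ₃ : ℝ → ℝ)
    (hf : Differentiable ℝ ⇑f) (hf' : ∀ x, deriv (⇑f) x ≠ 0)
    (hfsymm : Differentiable ℝ ⇑f.symm)
    (hγ₁ : Differentiable ℝ γ₁)
    (A B C₁ C₂ α : ℝ → ℝ) (hA : Differentiable ℝ A) (hA0 : ∀ x, A x ≠ 0) :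
    ∀ x, WsqJ n (transA n f γ₁ A) (transB n f γ₁ γ₂ γ₃ A B C₁ C₂)
          (transC1 n f γ₁ γ₂ γ₃ A C₁) (transC2 n f γ₁ γ₂ γ₃ A C₂)
          (transAlpha f γ₁ α) (f x)
        * (deriv (⇑f) x) ^ 2
      = WsqJ n A B C₁ C₂ α x := by
  intro x
  have hn3 : (3 : ℝ) ≤ n := by exact_mod_cast hn
  have hWsq := Wsq_trans_mul_deriv_sq n (by linarith) (by linarith) f γ₁ γ₂ γ₃ A B C₁ C₂
    (hf x) (hf' x) (hfsymm (f x)) (hγ₁ x) (hA x) (hA0 x)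
  rw [WsqJ, WsqJ, mul_assoc, hWsq, exp_transAlpha_mul_transA]

/-- The square `W_J` of the integrand of the invariant `I_J^n` (eq. (i4))
transforms as a density of weight two in the scalar field:
`W̄_J(f x)·(f' x)² = W_J(x)` for all `x`, where `W̄_J` is formed from the
transformed coefficients `(Ā, B̄, C̄₁, C̄₂, ᾱ)`. Hence the integral invariant
`I_J^n = ∫√(±W_J) dΦ` is (up to an additive constant) invariant under the
conformal–almost-geodesic frame transformations. -/
theorem WsqJ_weight_two (n : ℕ) (hn : 3 ≤ n)
    (f : ℝ ≃ ℝ) (γ₁ γ₂ γ₃ : ℝ → ℝ)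
    (hf : Differentiable ℝ ⇑f) (hf' : ∀ x, deriv (⇑f) x ≠ 0)
    (hfsymm : Differentiable ℝ ⇑f.symm)
    (hγ₁ : Differentiable ℝ γ₁) (hγ₂ : Differentiable ℝ γ₂) (hγ₃ : Differentiable ℝ γ₃)
    (A B C₁ C₂ α : ℝ → ℝ) (hA : Differentiable ℝ A) (hA0 : ∀ x, A x ≠ 0) :
    ∀ x, WsqJ n (transA n f γ₁ A) (transB n f γ₁ γ₂ γ₃ A B C₁ C₂)
          (transC1 n f γ₁ γ₂ γ₃ A C₁) (transC2 n f γ₁ γ₂ γ₃ A C₂)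
          (transAlpha f γ₁ α) (f x)
        * (deriv (⇑f) x) ^ 2
      = WsqJ n A B C₁ C₂ α x :=
  WsqJ_weight_two_general n hn f γ₁ γ₂ γ₃ hf hf' hfsymm hγ₁ A B C₁ C₂ α hA hA0
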